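/- The second simple shortest path distance equals the minimum replacement distance over edges of one fixed shortest path: if P is a shortest simple path from s to t in G, then d_2(s,t) = min over e ∈ P of d(s,t,e), where d_2(s,t) is the minimum weight of a simple s-t path differing from P in at least one edge. -/

import Mathlib

/-!
A simple `s`-`t` path `Q` whose edge set differs from that of the simple path `P` must miss an
edge of `P`: if `Q` used every edge of `P`, then leaving `s` along the first edge of `P` would
force `Q` to follow `P` step by step, so `Q = P`. Conversely, a walk avoiding an edge `e` of `P`
shortcuts, by cutting out cycles, to a simple path that uses a sublist of its edges, so it is no
heavier, still avoids `e`, and hence differs from `P`.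
-/

open scoped ENNReal

variable {V : Type*}

/-- `p` is a walk/path from `u` to `v` using edges of `E`, given as its list of vertices. -/
def IsPath (E : Set (V × V)) (u v : V) (p : List V) : Prop :=
  p.head? = some u ∧ p.getLast? = some v ∧ List.Chain' (fun a b => (a, b) ∈ E) p

/-- The list of (directed) edges traversed by a path `p`. -/
def edgesOf (p : List V) : List (V × V) := p.zip p.tail

/-- Total weight of a path. -/
noncomputable def pweight (w : V × V → ℝ≥0∞) (p : List V) : ℝ≥0∞ := ((edgesOf p).map w).sum

/-- Number of edges (hops) of a path. -/
def hops (p : List V) : ℕ := p.length - 1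

/-- Shortest-path distance from `u` to `v`. -/
noncomputable def gdist (E : Set (V × V)) (w : V × V → ℝ≥0∞) (u v : V) : ℝ≥0∞ :=
  sInf {c | ∃ p, IsPath E u v p ∧ pweight w p = c}

/-- Replacement distance: shortest-path distance from `u` to `v` avoiding edge `e`. -/
noncomputable def dRepl (E : Set (V × V)) (w : V × V → ℝ≥0∞) (u v : V) (e : V × V) : ℝ≥0∞ :=
  sInf {c | ∃ p, IsPath E u v p ∧ e ∉ edgesOf p ∧ pweight w p = c}

/-- `h`-hop-limited replacement distance from `u` to `v` avoiding edge `e`. -/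
noncomputable def dh (E : Set (V × V)) (w : V × V → ℝ≥0∞) (h : ℕ) (u v : V) (e : V × V) :
    ℝ≥0∞ :=
  sInf {c | ∃ p, IsPath E u v p ∧ hops p ≤ h ∧ e ∉ edgesOf p ∧ pweight w p = c}

@[simp] lemma edgesOf_nil : edgesOf ([] : List V) = [] := rfl

@[simp] lemma edgesOf_singleton (a : V) : edgesOf [a] = [] := rfl

@[simp] lemma edgesOf_cons_cons (a b : V) (l : List V) :
    edgesOf (a :: b :: l) = (a, b) :: edgesOf (b :: l) := rfl

lemma fst_mem_of_mem_edgesOf {l : List V} {e : V × V} (h : e ∈ edgesOf l) : e.1 ∈ l :=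
  (List.of_mem_zip h).1

lemma edgesOf_sublist_cons (a : V) (l : List V) : (edgesOf l).Sublist (edgesOf (a :: l)) := by
  cases l <;> simp

lemma edgesOf_sublist_append (l₁ l₂ : List V) : (edgesOf l₂).Sublist (edgesOf (l₁ ++ l₂)) := by
  induction l₁ with
  | nil => exact .refl _
  | cons a l₁ ih => exact ih.trans (edgesOf_sublist_cons a _)

lemma isChain_iff_forall_mem_edgesOf {R : V → V → Prop} {l : List V} :
    l.IsChain R ↔ ∀ e ∈ edgesOf l, R e.1 e.2 := by
  induction l using List.twoStepInduction <;> simp_all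

lemma pweight_le_of_sublist (w : V × V → ℝ≥0∞) {p q : List V}
    (h : (edgesOf q).Sublist (edgesOf p)) : pweight w q ≤ pweight w p :=
  (h.map w).sum_le_sum fun _ _ => bot_le

lemma exists_nodup_edgesOf_sublist (p : List V) :
    ∃ q : List V, q.Nodup ∧ q.head? = p.head? ∧ q.getLast? = p.getLast? ∧
      (edgesOf q).Sublist (edgesOf p) := by
  induction p with
  | nil => exact ⟨[], List.nodup_nil, rfl, rfl, .refl _⟩
  | cons v l ih =>
    obtain ⟨q, hnd, hhead, hlast, hsub⟩ := ih
    by_cases hv : v ∈ q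
    · obtain ⟨q₁, q₂, rfl⟩ := List.append_of_mem hv
      refine ⟨v :: q₂, hnd.sublist (List.sublist_append_right _ _), rfl, ?_,
        (edgesOf_sublist_append q₁ _).trans (hsub.trans (edgesOf_sublist_cons v l))⟩
      cases l with
      | nil => simp at hhead
      | cons u l => rw [List.getLast?_cons_cons, ← hlast, List.getLast?_append_cons]
    · refine ⟨v :: q, List.nodup_cons.2 ⟨hv, hnd⟩, rfl, ?_, ?_⟩ <;>
      cases l with
      | nil => simp_all
      | cons u l =>
        obtain ⟨q', rfl⟩ : ∃ q', q = u :: q' := List.head?_eq_some_iff.1 hhead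
        simp_all

lemma eq_singleton_of_nodup {q : List V} {a : V} (hnd : q.Nodup) (hhead : q.head? = some a)
    (hlast : q.getLast? = some a) : q = [a] := by
  obtain ⟨q', rfl⟩ := List.head?_eq_some_iff.1 hhead
  cases q' with
  | nil => rfl
  | cons b q' =>
    rw [List.getLast?_cons_cons] at hlast
    exact absurd (List.mem_of_getLast? hlast) (List.nodup_cons.1 hnd).1

lemma head?_eq_of_mem_edgesOf_cons {a b : V} {l : List V} (hnd : (a :: l).Nodup)
    (h : (a, b) ∈ edgesOf (a :: l)) : l.head? = some b := by
  cases l with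
  | nil => simp at h
  | cons c l =>
    rw [edgesOf_cons_cons, List.mem_cons] at h
    rcases h with h | h
    · simp_all
    · exact absurd (fst_mem_of_mem_edgesOf h) (List.nodup_cons.1 hnd).1

lemma eq_of_nodup_of_edgesOf_subset {P Q : List V} (hP : P.Nodup) (hQ : Q.Nodup)
    (hhead : P.head? = Q.head?) (hlast : P.getLast? = Q.getLast?)
    (hsub : edgesOf P ⊆ edgesOf Q) : P = Q := by
  induction P using List.twoStepInduction generalizing Q with
  | nil => exact (List.head?_eq_none_iff.1 hhead.symm).symm
  | singleton a => exact (eq_singleton_of_nodup hQ hhead.symm hlast.symm).symm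
  | cons_cons a b l _ ih =>
    obtain ⟨Q', rfl⟩ := List.head?_eq_some_iff.1 hhead.symm
    have hQ' : Q'.head? = some b :=
      head?_eq_of_mem_edgesOf_cons hQ (hsub (by simp))
    obtain ⟨Q'', rfl⟩ := List.head?_eq_some_iff.1 hQ'
    have ha : a ∉ b :: l := (List.nodup_cons.1 hP).1
    have hsub' : edgesOf (b :: l) ⊆ edgesOf (b :: Q'') := by
      intro f hf
      have hfQ := hsub (List.mem_cons_of_mem _ hf)
      rw [edgesOf_cons_cons, List.mem_cons] at hfQ
      refine hfQ.resolve_left fun hfa => ha ?_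
      simpa [hfa] using fst_mem_of_mem_edgesOf hf
    rw [ih b (List.nodup_cons.1 hP).2 (List.nodup_cons.1 hQ).2 rfl
      (by simpa only [List.getLast?_cons_cons] using hlast) hsub']

lemma IsPath.of_edgesOf_subset {E : Set (V × V)} {u v : V} {p q : List V} (hp : IsPath E u v p)
    (hhead : q.head? = p.head?) (hlast : q.getLast? = p.getLast?)
    (hsub : edgesOf q ⊆ edgesOf p) : IsPath E u v q :=
  ⟨hhead.trans hp.1, hlast.trans hp.2.1, isChain_iff_forall_mem_edgesOf.2 fun _ he =>
    isChain_iff_forall_mem_edgesOf.1 hp.2.2 _ (hsub he)⟩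

lemma IsPath.exists_nodup {E : Set (V × V)} {u v : V} {p : List V} (hp : IsPath E u v p) :
    ∃ q, IsPath E u v q ∧ q.Nodup ∧ (edgesOf q).Sublist (edgesOf p) := by
  obtain ⟨q, hnd, hhead, hlast, hsub⟩ := exists_nodup_edgesOf_sublist p
  exact ⟨q, hp.of_edgesOf_subset hhead hlast hsub.subset, hnd, hsub⟩

theorem stmt12_general (E : Set (V × V)) (w : V × V → ℝ≥0∞) (s t : V) (P : List V)
    (hP : IsPath E s t P) (hsimple : P.Nodup) :
    sInf {c | ∃ Q, IsPath E s t Q ∧ Q.Nodup ∧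
        {f | f ∈ edgesOf Q} ≠ {f | f ∈ edgesOf P} ∧ pweight w Q = c} =
      ⨅ e ∈ edgesOf P, dRepl E w s t e := by
  apply le_antisymm
  · refine le_iInf₂ fun e he => le_sInf ?_
    rintro _ ⟨p, hp, hep, rfl⟩
    obtain ⟨q, hq, hqnd, hsub⟩ := hp.exists_nodup
    have hne : {f | f ∈ edgesOf q} ≠ {f | f ∈ edgesOf P} := fun h =>
      hep (hsub.subset ((Set.ext_iff.1 h e).2 he))
    exact le_trans (sInf_le ⟨q, hq, hqnd, hne, rfl⟩) (pweight_le_of_sublist w hsub)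
  · refine le_sInf ?_
    rintro _ ⟨Q, hQ, hQnd, hne, rfl⟩
    obtain ⟨e, heP, heQ⟩ : ∃ e ∈ edgesOf P, e ∉ edgesOf Q := by
      by_contra! hsub
      have hPQ := eq_of_nodup_of_edgesOf_subset hsimple hQnd (hP.1.trans hQ.1.symm)
        (hP.2.1.trans hQ.2.1.symm) hsub
      exact hne (by rw [hPQ])
    exact le_trans (iInf₂_le e heP) (sInf_le ⟨Q, hQ, heQ, rfl⟩)

/-- If `P` is a shortest simple `s`-`t` path, then the second simple shortest path
distance `d₂(s,t)` (minimum weight of a simple `s`-`t` path whose edge set differs from that of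
`P`) equals `min_{e ∈ P} d(s,t,e)`. -/
theorem stmt12 (E : Set (V × V)) (w : V × V → ℝ≥0∞) (s t : V) (P : List V)
    (hP : IsPath E s t P) (hsimple : P.Nodup) (hshort : pweight w P = gdist E w s t) :
    sInf {c | ∃ Q, IsPath E s t Q ∧ Q.Nodup ∧
        {f | f ∈ edgesOf Q} ≠ {f | f ∈ edgesOf P} ∧ pweight w Q = c} =
      ⨅ e ∈ edgesOf P, dRepl E w s t e :=
  stmt12_general E w s t P hP hsimple
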